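/- arXiv:2003.07222 — 6 statements merged into one kernel-verified Lean document; each statement's English description precedes it below -/
import Mathlib

section
/- Let X be a complex Banach space, T a bounded linear operator on X with ‖T‖ ≤ 1, and P a bounded projection (P ∘ P = P) on X with ‖P‖ ≤ 1 and PT = TP. Then the following three conditions are equivalent: (i) T is uniformly P-ergodic; (ii) TP = P and there exists n₀ ∈ ℕ such that δ_P(T^{n₀}) < 1; (iii) TP = P and r(T − P) < 1. -/
/-!
Put `A = T - P`. Once `T P = P`, the relations `P² = P` and `P T = T P` give `Aⁿ = Tⁿ - P` for
`n ≥ 1` and `P A = 0`, so uniform `P`-ergodicity says `‖Aⁿ‖ → 0`, which by Gelfand's formula is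
`r(A) < 1`; and `T P = P` is forced by `Tⁿ → P`. On `ker P`, which contains the range of `A`, the
powers of `A` and of `T` agree, whence `‖A^(n₀ j + 1)‖ ≤ δ_P(T^n₀)ʲ ‖A‖`: if `δ_P(T^n₀) < 1` some
power of `A` has norm `< 1`, so `r(A) < 1`. Conversely `δ_P(Tⁿ) ≤ ‖Tⁿ - P‖`.
-/

open Filter Topology

/-- The generalized Dobrushin ergodicity coefficient of `T` with respect to `P`:
`δ_P(T) = sup {‖T x‖ : P x = 0, ‖x‖ ≤ 1}`. -/
noncomputable def dobrushinCoeff {X : Type*} [NormedAddCommGroup X] [NormedSpace ℂ X]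
    (P T : X →L[ℂ] X) : ℝ :=
  sSup {r : ℝ | ∃ x : X, P x = 0 ∧ ‖x‖ ≤ 1 ∧ r = ‖T x‖}

section Idempotent

variable {R : Type*} [Ring R] {t p : R}

theorem pow_mul_eq_self_of_mul_eq_self (h : t * p = p) (n : ℕ) : t ^ n * p = p := by
  induction n with
  | zero => rw [pow_zero, one_mul]
  | succ n ih => rw [pow_succ', mul_assoc, ih, h]

theorem mul_pow_eq_self_of_mul_eq_self (h : p * t = p) (n : ℕ) : p * t ^ n = p := by
  induction n with
  | zero => rw [pow_zero, mul_one]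
  | succ n ih => rw [pow_succ, ← mul_assoc, ih, h]

theorem sub_pow_succ_eq_pow_succ_sub (hp : IsIdempotentElem p) (htp : t * p = p)
    (hpt : p * t = p) (n : ℕ) : (t - p) ^ (n + 1) = t ^ (n + 1) - p := by
  induction n with
  | zero => rw [zero_add, pow_one, pow_one]
  | succ n ih =>
    rw [pow_succ, ih, sub_mul, mul_sub, mul_sub, ← pow_succ, pow_mul_eq_self_of_mul_eq_self htp,
      hpt, hp.eq, sub_self, sub_zero]

theorem mul_sub_pow_succ_eq_zero (hp : IsIdempotentElem p) (htp : t * p = p)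
    (hpt : p * t = p) (n : ℕ) : p * (t - p) ^ (n + 1) = 0 := by
  rw [sub_pow_succ_eq_pow_succ_sub hp htp hpt, mul_sub, mul_pow_eq_self_of_mul_eq_self hpt,
    hp.eq, sub_self]

end Idempotent

theorem mul_eq_of_tendsto_pow {M : Type*} [Monoid M] [TopologicalSpace M] [ContinuousMul M]
    [T2Space M] {t p : M} (h : Tendsto (fun n : ℕ => t ^ n) atTop (𝓝 p)) : t * p = p := by
  refine tendsto_nhds_unique (h.const_mul t) ?_
  simpa only [pow_succ'] using (tendsto_add_atTop_iff_nat 1).mpr h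

theorem tendsto_norm_pow_sub_iff {R : Type*} [NormedRing R] {t p : R} (hp : IsIdempotentElem p)
    (htp : t * p = p) (hpt : p * t = p) :
    Tendsto (fun n : ℕ => ‖t ^ n - p‖) atTop (𝓝 0) ↔
      Tendsto (fun n : ℕ => ‖(t - p) ^ n‖) atTop (𝓝 0) := by
  refine tendsto_congr' ?_
  filter_upwards [eventually_ne_atTop 0] with n hn
  obtain ⟨k, rfl⟩ := Nat.exists_eq_add_one_of_ne_zero hn
  rw [sub_pow_succ_eq_pow_succ_sub hp htp hpt]

section SpectralRadius

variable {A : Type*} [NormedRing A] [NormedAlgebra ℂ A] [CompleteSpace A]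

theorem spectralRadius_le_ofReal_norm_pow_rpow (a : A) {m : ℕ} (hm : m ≠ 0) :
    spectralRadius ℂ a ≤ ENNReal.ofReal (‖a ^ m‖ ^ (1 / m : ℝ)) := by
  have hsub : Tendsto (fun k : ℕ => m * k) atTop atTop :=
    tendsto_id.const_mul_atTop' (Nat.pos_of_ne_zero hm)
  refine le_of_tendsto ((spectrum.pow_norm_pow_one_div_tendsto_nhds_spectralRadius a).comp hsub) ?_
  filter_upwards [eventually_ne_atTop 0] with k hk
  refine ENNReal.ofReal_le_ofReal ?_
  have hmk : (0 : ℝ) < m * k := by positivity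
  calc ‖a ^ (m * k)‖ ^ (1 / (m * k : ℕ) : ℝ)
      ≤ (‖a ^ m‖ ^ k) ^ (1 / (m * k : ℕ) : ℝ) := by
        rw [pow_mul]
        gcongr
        exact norm_pow_le' _ (Nat.pos_of_ne_zero hk)
    _ = ‖a ^ m‖ ^ (1 / m : ℝ) := by
        rw [← Real.rpow_natCast, ← Real.rpow_mul (norm_nonneg _)]
        congr 1
        push_cast
        field_simp

theorem spectralRadius_lt_one_of_norm_pow_lt_one {a : A} {m : ℕ} (hm : m ≠ 0)
    (h : ‖a ^ m‖ < 1) : spectralRadius ℂ a < 1 :=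
  (spectralRadius_le_ofReal_norm_pow_rpow a hm).trans_lt <| ENNReal.ofReal_lt_one.mpr <|
    Real.rpow_lt_one (norm_nonneg _) h (by positivity)

theorem tendsto_norm_pow_of_spectralRadius_lt_one {a : A} (h : spectralRadius ℂ a < 1) :
    Tendsto (fun n : ℕ => ‖a ^ n‖) atTop (𝓝 0) := by
  obtain ⟨c, hrc, hc1⟩ := exists_between h
  have hc : c ≠ ⊤ := ne_top_of_lt hc1
  have hc0 : 0 ≤ c.toReal := ENNReal.toReal_nonneg
  have hc1' : c.toReal < 1 := ENNReal.toReal_lt_of_lt_ofReal (by simpa using hc1)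
  refine squeeze_zero' (Eventually.of_forall fun n => norm_nonneg _) ?_
    (tendsto_pow_atTop_nhds_zero_of_lt_one hc0 hc1')
  filter_upwards [eventually_ne_atTop 0,
    (spectrum.pow_norm_pow_one_div_tendsto_nhds_spectralRadius a).eventually_lt_const hrc]
    with n hn hlt
  rw [ENNReal.ofReal_lt_iff_lt_toReal (by positivity) hc] at hlt
  calc ‖a ^ n‖ = (‖a ^ n‖ ^ (1 / n : ℝ)) ^ n := by
        rw [one_div, Real.rpow_inv_natCast_pow (norm_nonneg _) hn]
    _ ≤ c.toReal ^ n := by gcongr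

theorem spectralRadius_lt_one_iff_tendsto_norm_pow {a : A} :
    spectralRadius ℂ a < 1 ↔ Tendsto (fun n : ℕ => ‖a ^ n‖) atTop (𝓝 0) := by
  refine ⟨tendsto_norm_pow_of_spectralRadius_lt_one, fun h => ?_⟩
  obtain ⟨m, hm, hlt⟩ := ((eventually_ne_atTop 0).and (h.eventually_lt_const one_pos)).exists
  exact spectralRadius_lt_one_of_norm_pow_lt_one hm hlt

end SpectralRadius

section Dobrushin

variable {X : Type*} [NormedAddCommGroup X] [NormedSpace ℂ X]

theorem bddAbove_dobrushinCoeff_set (P S : X →L[ℂ] X) :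
    BddAbove {r : ℝ | ∃ x : X, P x = 0 ∧ ‖x‖ ≤ 1 ∧ r = ‖S x‖} := by
  refine ⟨‖S‖, ?_⟩
  rintro r ⟨x, -, hx, rfl⟩
  exact S.le_of_opNorm_le_of_le le_rfl hx |>.trans_eq (mul_one _)

theorem zero_mem_dobrushinCoeff_set (P S : X →L[ℂ] X) :
    (0 : ℝ) ∈ {r : ℝ | ∃ x : X, P x = 0 ∧ ‖x‖ ≤ 1 ∧ r = ‖S x‖} :=
  ⟨0, map_zero P, by simp, by simp⟩

theorem dobrushinCoeff_nonneg (P S : X →L[ℂ] X) : 0 ≤ dobrushinCoeff P S :=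
  le_csSup (bddAbove_dobrushinCoeff_set P S) (zero_mem_dobrushinCoeff_set P S)

theorem dobrushinCoeff_le_norm_sub (P S : X →L[ℂ] X) : dobrushinCoeff P S ≤ ‖S - P‖ := by
  refine csSup_le ⟨0, zero_mem_dobrushinCoeff_set P S⟩ ?_
  rintro r ⟨x, hPx, hx, rfl⟩
  calc ‖S x‖ = ‖(S - P) x‖ := by simp [hPx]
    _ ≤ ‖S - P‖ := (S - P).le_of_opNorm_le_of_le le_rfl hx |>.trans_eq (mul_one _)

theorem norm_apply_le_dobrushinCoeff_mul (P S : X →L[ℂ] X) {x : X} (hPx : P x = 0) :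
    ‖S x‖ ≤ dobrushinCoeff P S * ‖x‖ := by
  rcases eq_or_ne x 0 with rfl | hx
  · simp
  set u : X := (‖x‖⁻¹ : ℂ) • x
  have hSu : ‖S u‖ ≤ dobrushinCoeff P S :=
    le_csSup (bddAbove_dobrushinCoeff_set P S)
      ⟨u, by simp [u, hPx], (norm_smul_inv_norm hx).le, rfl⟩
  have hxpos : 0 < ‖x‖ := norm_pos_iff.mpr hx
  calc ‖S x‖ = ‖S u‖ * ‖x‖ := by
        simp only [u, map_smul, norm_smul, norm_inv, Complex.norm_real, norm_norm]
        field_simp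
    _ ≤ dobrushinCoeff P S * ‖x‖ := by gcongr

end Dobrushin

section Ergodic

variable {X : Type*} [NormedAddCommGroup X] [NormedSpace ℂ X] {T P : X →L[ℂ] X}

theorem sub_pow_apply_eq_pow_apply (hP : IsIdempotentElem P) (hTP : T * P = P) (hPT : P * T = P)
    (n : ℕ) {y : X} (hPy : P y = 0) : ((T - P) ^ n) y = (T ^ n) y := by
  cases n with
  | zero => rfl
  | succ n => simp [sub_pow_succ_eq_pow_succ_sub hP hTP hPT, hPy]

-- The extra factor `T - P` moves everything into `ker P`, also when `n = 0`.
theorem norm_sub_pow_mul_add_one_le (hP : IsIdempotentElem P) (hTP : T * P = P)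
    (hPT : P * T = P) (n j : ℕ) :
    ‖(T - P) ^ (n * j + 1)‖ ≤ dobrushinCoeff P (T ^ n) ^ j * ‖T - P‖ := by
  induction j with
  | zero => simp
  | succ j ih =>
    have hδ := dobrushinCoeff_nonneg P (T ^ n)
    refine ContinuousLinearMap.opNorm_le_bound _ (by positivity) fun x => ?_
    set y := ((T - P) ^ (n * j + 1)) x
    have hPy : P y = 0 := by
      have h := congr($(mul_sub_pow_succ_eq_zero hP hTP hPT (n * j)) x)
      rwa [mul_apply_eq_comp, zero_apply] at h
    calc ‖((T - P) ^ (n * (j + 1) + 1)) x‖ = ‖(T ^ n) y‖ := by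
          rw [show n * (j + 1) + 1 = n + (n * j + 1) by ring, pow_add, mul_apply_eq_comp,
            sub_pow_apply_eq_pow_apply hP hTP hPT n hPy]
      _ ≤ dobrushinCoeff P (T ^ n) * ‖y‖ := norm_apply_le_dobrushinCoeff_mul P _ hPy
      _ ≤ dobrushinCoeff P (T ^ n) * (dobrushinCoeff P (T ^ n) ^ j * ‖T - P‖ * ‖x‖) := by
          gcongr
          exact ((T - P) ^ (n * j + 1)).le_of_opNorm_le ih x
      _ = dobrushinCoeff P (T ^ n) ^ (j + 1) * ‖T - P‖ * ‖x‖ := by ring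

theorem tendsto_norm_sub_pow_of_dobrushinCoeff_lt_one [CompleteSpace X] (hP : IsIdempotentElem P)
    (hTP : T * P = P) (hPT : P * T = P) {n : ℕ} (h : dobrushinCoeff P (T ^ n) < 1) :
    Tendsto (fun k : ℕ => ‖(T - P) ^ k‖) atTop (𝓝 0) := by
  have hlim : Tendsto (fun j : ℕ => dobrushinCoeff P (T ^ n) ^ j * ‖T - P‖) atTop (𝓝 0) := by
    simpa using (tendsto_pow_atTop_nhds_zero_of_lt_one (dobrushinCoeff_nonneg P _) h).mul_const
      ‖T - P‖
  obtain ⟨j, hj⟩ := (hlim.eventually_lt_const one_pos).exists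
  exact tendsto_norm_pow_of_spectralRadius_lt_one <| spectralRadius_lt_one_of_norm_pow_lt_one
    (Nat.succ_ne_zero _) ((norm_sub_pow_mul_add_one_le hP hTP hPT n j).trans_lt hj)

end Ergodic

theorem stmt0_general {X : Type*} [NormedAddCommGroup X] [NormedSpace ℂ X] [CompleteSpace X]
    (T P : X →L[ℂ] X)
    (hProj : P.comp P = P) (hComm : P.comp T = T.comp P) :
    (Tendsto (fun n : ℕ => ‖T ^ n - P‖) atTop (𝓝 0) ↔
      (T.comp P = P ∧ ∃ n₀ : ℕ, dobrushinCoeff P (T ^ n₀) < 1)) ∧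
    (Tendsto (fun n : ℕ => ‖T ^ n - P‖) atTop (𝓝 0) ↔
      (T.comp P = P ∧ spectralRadius ℂ (T - P) < 1)) := by
  have hP : IsIdempotentElem P := hProj
  have hergodic : Tendsto (fun n : ℕ => ‖T ^ n - P‖) atTop (𝓝 0) ↔
      T * P = P ∧ Tendsto (fun n : ℕ => ‖(T - P) ^ n‖) atTop (𝓝 0) := by
    refine ⟨fun h => ?_, fun ⟨hTP, h⟩ => (tendsto_norm_pow_sub_iff hP hTP (hComm.trans hTP)).2 h⟩
    have hTP := mul_eq_of_tendsto_pow (tendsto_iff_norm_sub_tendsto_zero.2 h)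
    exact ⟨hTP, (tendsto_norm_pow_sub_iff hP hTP (hComm.trans hTP)).1 h⟩
  refine ⟨⟨fun h => ?_, ?_⟩,
    hergodic.trans (and_congr_right fun _ => spectralRadius_lt_one_iff_tendsto_norm_pow.symm)⟩
  · have hδ := squeeze_zero (fun n => dobrushinCoeff_nonneg P (T ^ n))
      (fun n => dobrushinCoeff_le_norm_sub P (T ^ n)) h
    exact ⟨(hergodic.1 h).1, (hδ.eventually_lt_const one_pos).exists⟩
  · rintro ⟨hTP, n, hn⟩
    exact hergodic.2
      ⟨hTP, tendsto_norm_sub_pow_of_dobrushinCoeff_lt_one hP hTP (hComm.trans hTP) hn⟩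

theorem stmt0 {X : Type*} [NormedAddCommGroup X] [NormedSpace ℂ X] [CompleteSpace X]
    (T P : X →L[ℂ] X) (hT : ‖T‖ ≤ 1) (hPnorm : ‖P‖ ≤ 1)
    (hProj : P.comp P = P) (hComm : P.comp T = T.comp P) :
    (Tendsto (fun n : ℕ => ‖T ^ n - P‖) atTop (𝓝 0) ↔
      (T.comp P = P ∧ ∃ n₀ : ℕ, dobrushinCoeff P (T ^ n₀) < 1)) ∧
    (Tendsto (fun n : ℕ => ‖T ^ n - P‖) atTop (𝓝 0) ↔
      (T.comp P = P ∧ spectralRadius ℂ (T - P) < 1)) :=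
  stmt0_general T P hProj hComm
end

section
/- Let X be a complex Banach space, T a bounded linear operator on X with ‖T‖ ≤ 1, and P a bounded projection (P ∘ P = P) on X with ‖P‖ ≤ 1 and PT = TP = P. If T is uniformly P-ergodic, then r(T − P) = sup{|λ| : λ ∈ σ(T), λ ≠ 1}, where the supremum over the empty set is taken to be 0. -/
/-!
Put `A = T - P`. Because `P` is idempotent and `TP = PT = P`, we have `Aⁿ = Tⁿ - P` for `n ≥ 1`,
so uniform ergodicity gives `‖Aⁿ‖ < 1` for some `n`, and hence `1 ∉ σ(A)`. For `λ ≠ 0, 1` the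
factorization `λ - T = (λ - A)(1 - λ⁻¹P)`, whose second factor is invertible, shows that `σ(T)`
and `σ(A)` agree away from `0` and `1`. The two suprema therefore run over the same nonzero numbers.
-/

open Filter Topology

theorem IsIdempotentElem.one_add_smul_mul_one_add_smul {R A : Type*} [CommSemiring R] [Semiring A]
    [Algebra R A] {p : A} (hp : IsIdempotentElem p) (a b : R) :
    (1 + a • p) * (1 + b • p) = 1 + (a + b + a * b) • p := by
  simp only [mul_add, add_mul, one_mul, mul_one, smul_mul_smul_comm, hp.eq]
  module

section Idempotent

variable {𝕜 A : Type*} [Field 𝕜] [Ring A] [Algebra 𝕜 A] {p t : A}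

theorem IsIdempotentElem.isUnit_one_sub_smul (hp : IsIdempotentElem p) {c : 𝕜} (hc : c ≠ 1) :
    IsUnit (1 - c • p) := by
  have hc' : 1 - c ≠ 0 := sub_ne_zero.mpr hc.symm
  have hsum : -c + c / (1 - c) + -c * (c / (1 - c)) = 0 := by field_simp; ring
  have hsum' : c / (1 - c) + -c + c / (1 - c) * -c = 0 := by linear_combination hsum
  rw [sub_eq_add_neg, ← neg_smul]
  refine isUnit_iff_exists.mpr ⟨1 + (c / (1 - c)) • p, ?_, ?_⟩
  · rw [hp.one_add_smul_mul_one_add_smul, hsum, zero_smul, add_zero]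
  · rw [hp.one_add_smul_mul_one_add_smul, hsum', zero_smul, add_zero]

theorem algebraMap_sub_eq_mul_one_sub_inv_smul (hp : IsIdempotentElem p) (htp : t * p = p)
    {μ : 𝕜} (hμ : μ ≠ 0) :
    algebraMap 𝕜 A μ - t = (algebraMap 𝕜 A μ - (t - p)) * (1 - μ⁻¹ • p) := by
  have hker : (t - p) * p = 0 := by rw [sub_mul, htp, hp.eq, sub_self]
  simp only [Algebra.algebraMap_eq_smul_one, mul_sub, sub_mul _ (t - p), mul_one, mul_smul_comm,
    hker, smul_zero, smul_mul_assoc, one_mul, smul_smul, inv_mul_cancel₀ hμ, one_smul]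
  abel

namespace spectrum

theorem mem_sub_of_isIdempotentElem_iff (hp : IsIdempotentElem p) (htp : t * p = p) {μ : 𝕜}
    (h0 : μ ≠ 0) (h1 : μ ≠ 1) : μ ∈ spectrum 𝕜 (t - p) ↔ μ ∈ spectrum 𝕜 t := by
  simp only [spectrum.mem_iff, algebraMap_sub_eq_mul_one_sub_inv_smul hp htp h0,
    (hp.isUnit_one_sub_smul (inv_ne_one.mpr h1)).mul_right_iff]

theorem sub_of_isIdempotentElem_diff_zero (hp : IsIdempotentElem p) (htp : t * p = p)
    (h1 : (1 : 𝕜) ∉ spectrum 𝕜 (t - p)) :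
    spectrum 𝕜 (t - p) \ {0} = (spectrum 𝕜 t \ {1}) \ {0} := by
  ext μ
  by_cases hμ1 : μ = 1
  · subst hμ1
    simp [h1]
  by_cases hμ0 : μ = 0
  · simp [hμ0]
  simp [hμ0, hμ1, mem_sub_of_isIdempotentElem_iff hp htp hμ0 hμ1]

end spectrum

end Idempotent

theorem pow_mul_eq_of_mul_eq {M : Type*} [Monoid M] {t p : M} (h : t * p = p) (n : ℕ) :
    t ^ n * p = p := by
  induction n with
  | zero => rw [pow_zero, one_mul]
  | succ n ih => rw [pow_succ', mul_assoc, ih, h]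

theorem sub_pow_succ_of_isIdempotentElem {R : Type*} [Ring R] {p t : R} (hp : IsIdempotentElem p)
    (hpt : p * t = p) (htp : t * p = p) (n : ℕ) : (t - p) ^ (n + 1) = t ^ (n + 1) - p := by
  induction n with
  | zero => rw [zero_add, pow_one, pow_one]
  | succ n ih =>
    rw [pow_succ, ih, sub_mul, mul_sub, mul_sub, hpt, hp.eq, pow_mul_eq_of_mul_eq htp, ← pow_succ]
    abel

theorem spectrum.one_notMem_of_norm_pow_mul_lt_one {𝕜 A : Type*} [NormedField 𝕜] [NormedRing A]
    [NormedAlgebra 𝕜 A] [CompleteSpace A] {a : A} {n : ℕ} (h : ‖a ^ n‖ * ‖(1 : A)‖ < 1) :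
    (1 : 𝕜) ∉ spectrum 𝕜 a := fun h1 => by
  have := spectrum.norm_le_norm_mul_of_mem (spectrum.pow_mem_pow a n h1)
  rw [one_pow, norm_one] at this
  linarith

theorem biSup_coe_nnnorm_diff_zero {E : Type*} [SeminormedAddGroup E] (s : Set E) :
    ⨆ x ∈ s \ {0}, (‖x‖₊ : ENNReal) = ⨆ x ∈ s, (‖x‖₊ : ENNReal) := by
  refine le_antisymm (biSup_mono fun _ hx => hx.1) (iSup₂_le fun x hx => ?_)
  by_cases hx0 : x = 0
  · simp [hx0]
  · exact le_iSup₂_of_le x ⟨hx, hx0⟩ le_rfl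

theorem stmt1_general {X : Type*} [NormedAddCommGroup X] [NormedSpace ℂ X] [CompleteSpace X]
    (T P : X →L[ℂ] X)
    (hProj : P.comp P = P) (hPT : P.comp T = P) (hTP : T.comp P = P)
    (hErg : Tendsto (fun n : ℕ => ‖T ^ n - P‖) atTop (𝓝 0)) :
    spectralRadius ℂ (T - P) = ⨆ μ ∈ (spectrum ℂ T \ {1}), (‖μ‖₊ : ENNReal) := by
  obtain ⟨N, hN⟩ := eventually_atTop.mp (hErg.eventually_lt_const one_pos)
  have hpow : ‖(T - P) ^ (N + 1)‖ * ‖(1 : X →L[ℂ] X)‖ < 1 := by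
    rw [sub_pow_succ_of_isIdempotentElem hProj hPT hTP]
    calc ‖T ^ (N + 1) - P‖ * ‖(1 : X →L[ℂ] X)‖ ≤ ‖T ^ (N + 1) - P‖ :=
          mul_le_of_le_one_right (norm_nonneg _) ContinuousLinearMap.norm_id_le
      _ < 1 := hN (N + 1) N.le_succ
  rw [spectralRadius, ← biSup_coe_nnnorm_diff_zero,
    spectrum.sub_of_isIdempotentElem_diff_zero hProj hTP
      (spectrum.one_notMem_of_norm_pow_mul_lt_one hpow),
    biSup_coe_nnnorm_diff_zero]

theorem stmt1 {X : Type*} [NormedAddCommGroup X] [NormedSpace ℂ X] [CompleteSpace X]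
    (T P : X →L[ℂ] X) (hT : ‖T‖ ≤ 1) (hPnorm : ‖P‖ ≤ 1)
    (hProj : P.comp P = P) (hPT : P.comp T = P) (hTP : T.comp P = P)
    (hErg : Tendsto (fun n : ℕ => ‖T ^ n - P‖) atTop (𝓝 0)) :
    spectralRadius ℂ (T - P) = ⨆ μ ∈ (spectrum ℂ T \ {1}), (‖μ‖₊ : ENNReal) :=
  stmt1_general T P hProj hPT hTP hErg
end

section
/- Let X be a strong abstract state space, P a Markov projection on X, and T a Markov operator on X with PT = TP and TP = P. Suppose there exist a constant λ ∈ (1/2, 1], an integer n₀ ∈ ℕ, and a Markov projection Q on X with Q = QP = PQ, such that for every x ∈ K there exists u_x ∈ X₊ with ‖u_x‖ ≥ λ, T^{n₀}x − u_x ∈ X₊, and Qx − u_x ∈ X₊. Then T is uniformly P-ergodic. -/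
open Filter Topology

/-!
A Markov operator contracts the norm of a strong abstract state space, and the minorization
`Tⁿ⁰x ≥ uₓ ≤ Qx` couples `Tⁿ⁰y` and `Tⁿ⁰z` for any two states with `Qy = Qz` through a common
part of mass at least `λ`. Since `Q = QP`, this makes `Tⁿ⁰` a strict contraction with factor
`2(1 - λ) < 1` on `ker P`. As `T` commutes with `P`, it preserves `ker P`, so the factor iterates,
and `Tⁿ - P = Tⁿ (1 - P)` decays geometrically.
-/

section Decay

variable {𝕜 E : Type*} [NontriviallyNormedField 𝕜] [NormedAddCommGroup E] [NormedSpace 𝕜 E]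

open ContinuousLinearMap

theorem apply_eq_zero_of_commute {S P : E →L[𝕜] E} (hPS : Commute P S) {x : E} (hx : P x = 0) :
    P (S x) = 0 := by
  rw [← mul_apply_eq_comp, hPS.eq, mul_apply_eq_comp, hx, map_zero]

theorem norm_pow_apply_le_of_ker {S P : E →L[𝕜] E} (hPS : Commute P S) {ρ : ℝ} (hρ : 0 ≤ ρ)
    (hS : ∀ x, P x = 0 → ‖S x‖ ≤ ρ * ‖x‖) (q : ℕ) {x : E} (hx : P x = 0) :
    ‖(S ^ q) x‖ ≤ ρ ^ q * ‖x‖ := by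
  induction q generalizing x with
  | zero => simp
  | succ q ih =>
    calc ‖(S ^ (q + 1)) x‖ = ‖(S ^ q) (S x)‖ := by rw [pow_succ, mul_apply_eq_comp]
      _ ≤ ρ ^ q * (ρ * ‖x‖) := (ih (apply_eq_zero_of_commute hPS hx)).trans (by gcongr; exact hS x hx)
      _ = ρ ^ (q + 1) * ‖x‖ := by ring

theorem norm_pow_sub_le {T P : E →L[𝕜] E} (hP : IsIdempotentElem P) (hPT : Commute P T)
    (hTP : T * P = P) (hT : ∀ x, ‖T x‖ ≤ ‖x‖) {m : ℕ} {ρ : ℝ} (hρ : 0 ≤ ρ)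
    (hdecay : ∀ x, P x = 0 → ‖(T ^ m) x‖ ≤ ρ * ‖x‖) (n : ℕ) :
    ‖T ^ n - P‖ ≤ ρ ^ (n / (m + 1)) * ‖1 - P‖ := by
  have hTn : ∀ k x, ‖(T ^ k) x‖ ≤ ‖x‖ := by
    intro k
    induction k with
    | zero => simp
    | succ k ih => intro x; rw [pow_succ, mul_apply_eq_comp]; exact (ih _).trans (hT x)
  have hdecay' : ∀ x, P x = 0 → ‖(T ^ (m + 1)) x‖ ≤ ρ * ‖x‖ := by
    intro x hx
    rw [pow_succ, mul_apply_eq_comp]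
    exact (hdecay _ (apply_eq_zero_of_commute hPT hx)).trans (by gcongr; exact hT x)
  have hTnP : T ^ n * P = P := by
    induction n with
    | zero => simp
    | succ k ih => rw [pow_succ, mul_assoc, hTP, ih]
  refine opNorm_le_bound _ (by positivity) fun x => ?_
  set y := (1 - P) x
  have hy : P y = 0 := by
    rw [← mul_apply_eq_comp, mul_sub, mul_one, hP.eq, sub_self, zero_apply]
  have hTn_sub : (T ^ n - P) x = ((T ^ (m + 1)) ^ (n / (m + 1))) ((T ^ (n % (m + 1))) y) := by
    have : T ^ n - P = (T ^ (m + 1)) ^ (n / (m + 1)) * T ^ (n % (m + 1)) * (1 - P) := by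
      rw [← pow_mul, ← pow_add, Nat.div_add_mod, mul_sub, mul_one, hTnP]
    rw [this]
    rfl
  calc ‖(T ^ n - P) x‖ ≤ ρ ^ (n / (m + 1)) * ‖(T ^ (n % (m + 1))) y‖ := by
        rw [hTn_sub]; exact norm_pow_apply_le_of_ker (hPT.pow_right _) hρ hdecay' _
          (apply_eq_zero_of_commute (hPT.pow_right _) hy)
    _ ≤ ρ ^ (n / (m + 1)) * (‖1 - P‖ * ‖x‖) := by
        gcongr; exact (hTn _ y).trans (le_opNorm _ x)
    _ = ρ ^ (n / (m + 1)) * ‖1 - P‖ * ‖x‖ := by ring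

theorem tendsto_norm_pow_sub_of_contraction_on_ker {T P : E →L[𝕜] E} (hP : IsIdempotentElem P)
    (hPT : Commute P T) (hTP : T * P = P) (hT : ∀ x, ‖T x‖ ≤ ‖x‖) {m : ℕ} {ρ : ℝ} (hρ0 : 0 ≤ ρ)
    (hρ1 : ρ < 1) (hdecay : ∀ x, P x = 0 → ‖(T ^ m) x‖ ≤ ρ * ‖x‖) :
    Tendsto (fun n : ℕ => ‖T ^ n - P‖) atTop (𝓝 0) := by
  have hρpow : Tendsto (fun n : ℕ => ρ ^ (n / (m + 1)) * ‖1 - P‖) atTop (𝓝 0) := by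
    simpa using ((tendsto_pow_atTop_nhds_zero_of_lt_one hρ0 hρ1).comp
      (Nat.tendsto_div_const_atTop m.succ_ne_zero)).mul_const ‖1 - P‖
  exact squeeze_zero (fun _ => norm_nonneg _) (norm_pow_sub_le hP hPT hTP hT hρ0 hdecay) hρpow

end Decay

section StateSpace

variable {X : Type*} [NormedAddCommGroup X] [NormedSpace ℝ X] {C : Set X} {f : X →L[ℝ] ℝ}

def IsMarkov (C : Set X) (f : X →L[ℝ] ℝ) (S : X →L[ℝ] X) : Prop :=
  (∀ x ∈ C, S x ∈ C) ∧ ∀ x, f (S x) = f x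

theorem IsMarkov.pow {S : X →L[ℝ] X} (hS : IsMarkov C f S) (n : ℕ) : IsMarkov C f (S ^ n) := by
  induction n with
  | zero => exact ⟨fun x hx => by simpa using hx, fun x => by simp⟩
  | succ n ih =>
    simp only [pow_succ, IsMarkov, mul_apply_eq_comp]
    exact ⟨fun x hx => ih.1 _ (hS.1 x hx), fun x => by rw [ih.2, hS.2]⟩

theorem norm_sub_le_of_mem (hf : ∀ x ∈ C, 0 ≤ f x)
    (hnorm : ∀ x : X, ‖x‖ = sInf {r : ℝ | ∃ y ∈ C, ∃ z ∈ C, x = y - z ∧ r = f y + f z})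
    {y z : X} (hy : y ∈ C) (hz : z ∈ C) : ‖y - z‖ ≤ f y + f z := by
  rw [hnorm]
  refine csInf_le ⟨0, ?_⟩ ⟨y, hy, z, hz, rfl, rfl⟩
  rintro r ⟨y', hy', z', hz', -, rfl⟩
  exact add_nonneg (hf y' hy') (hf z' hz')

theorem IsMarkov.norm_apply_le {S : X →L[ℝ] X} (hS : IsMarkov C f S)
    (hle : ∀ y ∈ C, ∀ z ∈ C, ‖y - z‖ ≤ f y + f z)
    (hstrong : ∀ x : X, ∃ y ∈ C, ∃ z ∈ C, x = y - z ∧ ‖x‖ = f y + f z) (x : X) :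
    ‖S x‖ ≤ ‖x‖ := by
  obtain ⟨y, hy, z, hz, rfl, hx⟩ := hstrong x
  calc ‖S (y - z)‖ = ‖S y - S z‖ := by rw [map_sub]
    _ ≤ f (S y) + f (S z) := hle _ (hS.1 y hy) _ (hS.1 z hz)
    _ = ‖y - z‖ := by rw [hS.2, hS.2, hx]

section Minorization

variable {S Q : X →L[ℝ] X} {lam : ℝ}

theorem norm_sub_le_of_minorization (hC_add : ∀ x ∈ C, ∀ y ∈ C, x + y ∈ C)
    (hle : ∀ y ∈ C, ∀ z ∈ C, ‖y - z‖ ≤ f y + f z)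
    (hSf : ∀ x, f (S x) = f x) (hQf : ∀ x, f (Q x) = f x)
    (hmin : ∀ x ∈ C, f x = 1 → ∃ u ∈ C, lam ≤ f u ∧ S x - u ∈ C ∧ Q x - u ∈ C)
    {y z : X} (hy : y ∈ C) (hz : z ∈ C) (hfy : f y = 1) (hfz : f z = 1) (hQ : Q y = Q z) :
    ‖S y - S z‖ ≤ 4 * (1 - lam) := by
  obtain ⟨u, hu, hfu, hSu, hQu⟩ := hmin y hy hfy
  obtain ⟨v, hv, hfv, hSv, hQv⟩ := hmin z hz hfz
  have hcoupling : S y - S z = ((S y - u) + (Q z - v)) - ((S z - v) + (Q y - u)) := by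
    rw [hQ]; abel
  calc ‖S y - S z‖ ≤ f ((S y - u) + (Q z - v)) + f ((S z - v) + (Q y - u)) :=
        hcoupling ▸ hle _ (hC_add _ hSu _ hQv) _ (hC_add _ hSv _ hQu)
    _ = 4 - 2 * (f u + f v) := by simp only [map_add, map_sub, hSf, hQf, hfy, hfz]; ring
    _ ≤ 4 * (1 - lam) := by linarith

theorem norm_apply_le_of_minorization (hC_add : ∀ x ∈ C, ∀ y ∈ C, x + y ∈ C)
    (hC_smul : ∀ r : ℝ, 0 ≤ r → ∀ x ∈ C, r • x ∈ C)
    (hle : ∀ y ∈ C, ∀ z ∈ C, ‖y - z‖ ≤ f y + f z)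
    (hstrong : ∀ x : X, ∃ y ∈ C, ∃ z ∈ C, x = y - z ∧ ‖x‖ = f y + f z)
    (hSf : ∀ x, f (S x) = f x) (hQf : ∀ x, f (Q x) = f x)
    (hmin : ∀ x ∈ C, f x = 1 → ∃ u ∈ C, lam ≤ f u ∧ S x - u ∈ C ∧ Q x - u ∈ C)
    {x : X} (hQx : Q x = 0) : ‖S x‖ ≤ 2 * (1 - lam) * ‖x‖ := by
  obtain ⟨y, hy, z, hz, rfl, hx⟩ := hstrong x
  have hQyz : Q y = Q z := by rwa [map_sub, sub_eq_zero] at hQx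
  have hfyz : f y = f z := by rw [← hQf y, ← hQf z, hQyz]
  rcases (norm_nonneg (y - z)).eq_or_lt with h0 | hpos
  · simp [norm_eq_zero.mp h0.symm]
  set c := f y
  have hc : 0 < c := by linarith
  have hy' : c⁻¹ • y ∈ C := hC_smul _ (inv_nonneg.mpr hc.le) y hy
  have hz' : c⁻¹ • z ∈ C := hC_smul _ (inv_nonneg.mpr hc.le) z hz
  have hfy' : f (c⁻¹ • y) = 1 := by rw [map_smul, smul_eq_mul, inv_mul_cancel₀ hc.ne']
  have hfz' : f (c⁻¹ • z) = 1 := by rw [map_smul, smul_eq_mul, ← hfyz, inv_mul_cancel₀ hc.ne']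
  have hQ' : Q (c⁻¹ • y) = Q (c⁻¹ • z) := by rw [map_smul, map_smul, hQyz]
  have hSx : S (y - z) = c • (S (c⁻¹ • y) - S (c⁻¹ • z)) := by
    rw [← map_sub, ← smul_sub, map_smul, smul_smul, mul_inv_cancel₀ hc.ne', one_smul]
  calc ‖S (y - z)‖ = c * ‖S (c⁻¹ • y) - S (c⁻¹ • z)‖ := by
        rw [hSx, norm_smul, Real.norm_of_nonneg hc.le]
    _ ≤ c * (4 * (1 - lam)) := by
        gcongr; exact norm_sub_le_of_minorization hC_add hle hSf hQf hmin hy' hz' hfy' hfz' hQ'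
    _ = 2 * (1 - lam) * ‖y - z‖ := by rw [hx, ← hfyz]; ring

end Minorization

end StateSpace

theorem stmt3_general {X : Type*} [NormedAddCommGroup X] [NormedSpace ℝ X]
    (C : Set X) (f : X →L[ℝ] ℝ)
    (hC_add : ∀ x ∈ C, ∀ y ∈ C, x + y ∈ C)
    (hC_smul : ∀ r : ℝ, 0 ≤ r → ∀ x ∈ C, r • x ∈ C)
    (hf_pos : ∀ x ∈ C, x ≠ 0 → 0 < f x)
    (hnorm : ∀ x : X, ‖x‖ = sInf {r : ℝ | ∃ y ∈ C, ∃ z ∈ C, x = y - z ∧ r = f y + f z})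
    (hstrong : ∀ x : X, ∃ y ∈ C, ∃ z ∈ C, x = y - z ∧ ‖x‖ = f y + f z)
    (T P : X →L[ℝ] X)
    (hT_pos : ∀ x ∈ C, T x ∈ C) (hT_f : ∀ x, f (T x) = f x)
    (hP_proj : P.comp P = P)
    (hComm : P.comp T = T.comp P) (hTP : T.comp P = P)
    (hD : ∃ lam : ℝ, 1 / 2 < lam ∧ lam ≤ 1 ∧ ∃ n₀ : ℕ, ∃ Q : X →L[ℝ] X,
      (∀ x ∈ C, Q x ∈ C) ∧ (∀ x, f (Q x) = f x) ∧ Q.comp Q = Q ∧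
      Q = Q.comp P ∧ Q = P.comp Q ∧
      ∀ x ∈ C, f x = 1 → ∃ u ∈ C, lam ≤ ‖u‖ ∧ (T ^ n₀) x - u ∈ C ∧ Q x - u ∈ C) :
    Tendsto (fun n : ℕ => ‖T ^ n - P‖) atTop (𝓝 0) := by
  obtain ⟨lam, hlam, hlam_le, n₀, Q, -, hQ_f, -, hQP, -, hKey⟩ := hD
  have hf_nonneg : ∀ x ∈ C, 0 ≤ f x := fun x hx =>
    (eq_or_ne x 0).elim (fun h => by simp [h]) fun h => (hf_pos x hx h).le
  have hle : ∀ y ∈ C, ∀ z ∈ C, ‖y - z‖ ≤ f y + f z := fun y hy z hz =>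
    norm_sub_le_of_mem hf_nonneg hnorm hy hz
  have h0 : (0 : X) ∈ C := by
    obtain ⟨y, hy, -⟩ := hstrong 0
    simpa using hC_smul 0 le_rfl y hy
  have hT : IsMarkov C f T := ⟨hT_pos, hT_f⟩
  have hmin : ∀ x ∈ C, f x = 1 → ∃ u ∈ C, lam ≤ f u ∧ (T ^ n₀) x - u ∈ C ∧ Q x - u ∈ C := by
    intro x hx hfx
    obtain ⟨u, hu, hlam_u, hTu, hQu⟩ := hKey x hx hfx
    exact ⟨u, hu, hlam_u.trans (by simpa using hle u hu 0 h0), hTu, hQu⟩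
  refine tendsto_norm_pow_sub_of_contraction_on_ker hP_proj hComm hTP (hT.norm_apply_le hle hstrong)
    (m := n₀) (by linarith : 0 ≤ 2 * (1 - lam)) (by linarith) fun x hx => ?_
  have hQx : Q x = 0 := by rw [hQP, ContinuousLinearMap.comp_apply, hx, map_zero]
  exact norm_apply_le_of_minorization hC_add hC_smul hle hstrong (hT.pow n₀).2 hQ_f hmin hQx

theorem stmt3 {X : Type*} [NormedAddCommGroup X] [NormedSpace ℝ X] [CompleteSpace X]
    (C : Set X) (f : X →L[ℝ] ℝ)
    (hC_closed : IsClosed C)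
    (hC_add : ∀ x ∈ C, ∀ y ∈ C, x + y ∈ C)
    (hC_smul : ∀ r : ℝ, 0 ≤ r → ∀ x ∈ C, r • x ∈ C)
    (hC_pointed : ∀ x ∈ C, -x ∈ C → x = 0)
    (hf_pos : ∀ x ∈ C, x ≠ 0 → 0 < f x)
    (hnorm : ∀ x : X, ‖x‖ = sInf {r : ℝ | ∃ y ∈ C, ∃ z ∈ C, x = y - z ∧ r = f y + f z})
    (hstrong : ∀ x : X, ∃ y ∈ C, ∃ z ∈ C, x = y - z ∧ ‖x‖ = f y + f z)
    (T P : X →L[ℝ] X)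
    (hT_pos : ∀ x ∈ C, T x ∈ C) (hT_f : ∀ x, f (T x) = f x)
    (hP_pos : ∀ x ∈ C, P x ∈ C) (hP_f : ∀ x, f (P x) = f x)
    (hP_proj : P.comp P = P)
    (hComm : P.comp T = T.comp P) (hTP : T.comp P = P)
    (hD : ∃ lam : ℝ, 1 / 2 < lam ∧ lam ≤ 1 ∧ ∃ n₀ : ℕ, ∃ Q : X →L[ℝ] X,
      (∀ x ∈ C, Q x ∈ C) ∧ (∀ x, f (Q x) = f x) ∧ Q.comp Q = Q ∧
      Q = Q.comp P ∧ Q = P.comp Q ∧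
      ∀ x ∈ C, f x = 1 → ∃ u ∈ C, lam ≤ ‖u‖ ∧ (T ^ n₀) x - u ∈ C ∧ Q x - u ∈ C) :
    Tendsto (fun n : ℕ => ‖T ^ n - P‖) atTop (𝓝 0) :=
  stmt3_general C f hC_add hC_smul hf_pos hnorm hstrong T P hT_pos hT_f hP_proj hComm hTP hD
end

section
/- Let X be a complex Banach space, T a bounded linear operator on X with ‖T‖ ≤ 1, and P a bounded linear operator on X. If ‖Tⁿ − P‖ → 0 as n → ∞, then P is a projection satisfying TP = PT = P, and r(T − P) < 1. -/
/-! Since `Tⁿ → P` and multiplication is continuous, `Tⁿ⁺¹ = T Tⁿ = Tⁿ T` and `T²ⁿ = Tⁿ Tⁿ` force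
`TP = PT = P` and `P² = P`. These identities give `(T - P)ⁿ = Tⁿ - P` for `n ≥ 1`, so the powers of
`T - P` tend to `0`; once `‖(T - P)ⁿ⁺¹‖ ‖1‖ < 1`, the bound `r(b) ≤ (‖bⁿ⁺¹‖ ‖1‖)^(1/(n+1))` gives
`r(T - P) < 1`. -/

open Filter Topology
open scoped ENNReal NNReal

section TopologicalMonoid

variable {M : Type*} [Monoid M] [TopologicalSpace M] [ContinuousMul M] [T2Space M] {a p : M}

theorem mul_eq_self_of_tendsto_pow (h : Tendsto (a ^ ·) atTop (𝓝 p)) : a * p = p := by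
  have hshift : Tendsto (fun n : ℕ => a * a ^ n) atTop (𝓝 p) :=
    (h.comp (tendsto_add_atTop_nat 1)).congr fun n => pow_succ' a n
  exact tendsto_nhds_unique (h.const_mul a) hshift

theorem self_mul_eq_of_tendsto_pow (h : Tendsto (a ^ ·) atTop (𝓝 p)) : p * a = p := by
  have hshift : Tendsto (fun n : ℕ => a ^ n * a) atTop (𝓝 p) :=
    (h.comp (tendsto_add_atTop_nat 1)).congr fun n => pow_succ a n
  exact tendsto_nhds_unique (h.mul_const a) hshift

theorem isIdempotentElem_of_tendsto_pow (h : Tendsto (a ^ ·) atTop (𝓝 p)) :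
    IsIdempotentElem p := by
  have hdouble : Tendsto (fun n : ℕ => a ^ n * a ^ n) atTop (𝓝 p) :=
    (h.comp (tendsto_id.atTop_add_atTop tendsto_id)).congr fun n => pow_add a n n
  exact tendsto_nhds_unique (h.mul h) hdouble

end TopologicalMonoid

theorem sub_pow_succ_of_mul_eq_self {R : Type*} [Ring R] {a p : R} (hap : a * p = p)
    (hpa : p * a = p) (hp : IsIdempotentElem p) (n : ℕ) :
    (a - p) ^ (n + 1) = a ^ (n + 1) - p := by
  have hpow (k : ℕ) : a ^ k * p = p := by
    induction k with
    | zero => rw [pow_zero, one_mul]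
    | succ k ih => rw [pow_succ', mul_assoc, ih, hap]
  induction n with
  | zero => simp
  | succ n ih =>
    rw [pow_succ, ih, sub_mul, mul_sub, mul_sub, hpow, hpa, hp.eq, ← pow_succ]
    abel

theorem spectralRadius_lt_one_of_tendsto_pow_zero {𝕜 A : Type*} [NormedField 𝕜] [NormedRing A]
    [NormedAlgebra 𝕜 A] [CompleteSpace A] {b : A} (h : Tendsto (b ^ ·) atTop (𝓝 0)) :
    spectralRadius 𝕜 b < 1 := by
  have hsmall : Tendsto (fun n : ℕ => ‖b ^ (n + 1)‖ * ‖(1 : A)‖) atTop (𝓝 0) := by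
    simpa using (h.comp (tendsto_add_atTop_nat 1)).norm.mul_const ‖(1 : A)‖
  obtain ⟨N, hN⟩ := (hsmall.eventually (gt_mem_nhds one_pos)).exists
  have hexp : (0 : ℝ) ≤ 1 / (N + 1) := by positivity
  calc spectralRadius 𝕜 b
      ≤ (‖b ^ (N + 1)‖₊ : ℝ≥0∞) ^ (1 / (N + 1) : ℝ) * (‖(1 : A)‖₊ : ℝ≥0∞) ^ (1 / (N + 1) : ℝ) :=
        spectrum.spectralRadius_le_pow_nnnorm_pow_one_div 𝕜 b N
    _ = ((‖b ^ (N + 1)‖₊ * ‖(1 : A)‖₊ : ℝ≥0) : ℝ≥0∞) ^ (1 / (N + 1) : ℝ) := by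
        rw [ENNReal.coe_mul, ENNReal.mul_rpow_of_nonneg _ _ hexp]
    _ < 1 := ENNReal.rpow_lt_one (by exact_mod_cast hN) (by positivity)

theorem stmt7_general {X : Type*} [NormedAddCommGroup X] [NormedSpace ℂ X] [CompleteSpace X]
    (T P : X →L[ℂ] X)
    (hErg : Tendsto (fun n : ℕ => ‖T ^ n - P‖) atTop (𝓝 0)) :
    P.comp P = P ∧ T.comp P = P ∧ P.comp T = P ∧ spectralRadius ℂ (T - P) < 1 := by
  have hlim : Tendsto (T ^ ·) atTop (𝓝 P) := tendsto_iff_norm_sub_tendsto_zero.mpr hErg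
  have hTP := mul_eq_self_of_tendsto_pow hlim
  have hPT := self_mul_eq_of_tendsto_pow hlim
  have hPP := isIdempotentElem_of_tendsto_pow hlim
  refine ⟨hPP.eq, hTP, hPT, spectralRadius_lt_one_of_tendsto_pow_zero ?_⟩
  refine (tendsto_add_atTop_iff_nat 1).mp ?_
  simp only [sub_pow_succ_of_mul_eq_self hTP hPT hPP]
  simpa using (hlim.comp (tendsto_add_atTop_nat 1)).sub_const P

theorem stmt7 {X : Type*} [NormedAddCommGroup X] [NormedSpace ℂ X] [CompleteSpace X]
    (T P : X →L[ℂ] X) (hT : ‖T‖ ≤ 1)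
    (hErg : Tendsto (fun n : ℕ => ‖T ^ n - P‖) atTop (𝓝 0)) :
    P.comp P = P ∧ T.comp P = P ∧ P.comp T = P ∧ spectralRadius ℂ (T - P) < 1 :=
  stmt7_general T P hErg
end

section
/- Let X be a complex Banach space, T a bounded linear operator on X with ‖T‖ ≤ 1, and P a bounded projection (P ∘ P = P) on X with PT = TP = P. For λ ∈ ℂ with λ ≠ 0 and λ ≠ 1: there exists a sequence (xₙ) in X with ‖xₙ‖ = 1 for all n and ‖(T − P)xₙ − λxₙ‖ → 0 if and only if there exists a sequence (yₙ) in X with ‖yₙ‖ = 1 for all n and ‖Tyₙ − λyₙ‖ → 0. (Equivalently, λ lies in the approximate point spectrum of T − P if and only if it lies in the approximate point spectrum of T.) -/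
/-!
Write `Q = 1 - P`. Applying `P` to `A x - μ x`, where `A` is `T` or `T - P`, gives
`(c - μ) P x` with `c = 1` resp. `c = 0`, because `P T = P` and `P (T - P) = 0`. Hence along an
approximate eigenvector sequence `P xₙ → 0`, so `Q xₙ` still has norm tending to `1`. Since
`T Q = (T - P) Q = T - P`, the vectors `Q xₙ` are approximate eigenvectors of the other operator,
and normalizing them gives the required unit sequence.
-/

open Filter Topology

section ApproxEigenvalue

variable {𝕜 X : Type*}

def IsApproxEigenvalue [NormedField 𝕜] [SeminormedAddCommGroup X] [NormedSpace 𝕜 X]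
    (A : X →L[𝕜] X) (μ : 𝕜) : Prop :=
  ∃ x : ℕ → X, (∀ n, ‖x n‖ = 1) ∧ Tendsto (fun n => ‖A (x n) - μ • x n‖) atTop (𝓝 0)

theorem IsApproxEigenvalue.of_tendsto_norm_one [RCLike 𝕜] [NormedAddCommGroup X]
    [NormedSpace 𝕜 X] {A : X →L[𝕜] X} {μ : 𝕜} {z : ℕ → X}
    (hz : Tendsto (fun n => ‖z n‖) atTop (𝓝 1))
    (hA : Tendsto (fun n => A (z n) - μ • z n) atTop (𝓝 0)) :
    IsApproxEigenvalue A μ := by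
  obtain ⟨N, hN⟩ := eventually_atTop.1 (hz.eventually (eventually_ne_nhds one_ne_zero))
  have hz0 (n : ℕ) : z (n + N) ≠ 0 := norm_ne_zero_iff.1 (hN _ (Nat.le_add_left N n))
  refine ⟨fun n => (‖z (n + N)‖⁻¹ : 𝕜) • z (n + N), fun n => norm_smul_inv_norm (hz0 n), ?_⟩
  have hscale : Tendsto (fun n => (‖z (n + N)‖⁻¹ : 𝕜)) atTop (𝓝 1) := by
    have h := ((RCLike.continuous_ofReal (K := 𝕜)).tendsto 1).comp
      ((tendsto_add_atTop_iff_nat N).2 hz)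
    simpa using h.inv₀ (by simp)
  have hlim := hscale.smul ((tendsto_add_atTop_iff_nat N).2 hA)
  rw [smul_zero] at hlim
  refine (tendsto_zero_iff_norm_tendsto_zero.1 hlim).congr fun n => ?_
  rw [map_smul, smul_comm μ, smul_sub]

theorem tendsto_apply_zero_of_comp_eq_smul [NormedField 𝕜] [SeminormedAddCommGroup X]
    [NormedSpace 𝕜 X] {A P : X →L[𝕜] X} {c μ : 𝕜} (hPA : P.comp A = c • P) (hμ : μ ≠ c)
    {x : ℕ → X} (hx : Tendsto (fun n => A (x n) - μ • x n) atTop (𝓝 0)) :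
    Tendsto (fun n => P (x n)) atTop (𝓝 0) := by
  have hPx (v : X) : (c - μ)⁻¹ • P (A v - μ • v) = P v := by
    rw [map_sub, map_smul, ← ContinuousLinearMap.comp_apply, hPA,
      smul_apply, ← sub_smul, inv_smul_smul₀ (sub_ne_zero.2 hμ.symm)]
  have hlim := ((P.continuous.tendsto 0).comp hx).const_smul (c - μ)⁻¹
  rw [map_zero, smul_zero] at hlim
  exact hlim.congr fun n => hPx (x n)

theorem IsApproxEigenvalue.of_comp_id_sub [RCLike 𝕜] [NormedAddCommGroup X] [NormedSpace 𝕜 X]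
    {A B P : X →L[𝕜] X} {c d μ : 𝕜} (hPA : P.comp A = c • P) (hμ : μ ≠ c)
    (hB : B.comp (ContinuousLinearMap.id 𝕜 X - P) = A - d • P) (h : IsApproxEigenvalue A μ) :
    IsApproxEigenvalue B μ := by
  obtain ⟨x, hx1, hx⟩ := h
  rw [← tendsto_zero_iff_norm_tendsto_zero] at hx
  have hPx := tendsto_apply_zero_of_comp_eq_smul hPA hμ hx
  have hsplit (v : X) :
      (A v - μ • v) + (μ - d) • P v = B (v - P v) - μ • (v - P v) := by
    have hBv : B (v - P v) = A v - d • P v := by simpa using congrArg (· v) hB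
    rw [hBv, smul_sub, sub_smul]
    abel
  refine of_tendsto_norm_one (z := fun n => x n - P (x n)) ?_ ?_
  · rw [tendsto_iff_norm_sub_tendsto_zero]
    refine squeeze_zero (fun n => norm_nonneg _) (fun n => ?_) (by simpa using hPx.norm)
    simpa [hx1 n] using abs_norm_sub_norm_le (x n - P (x n)) (x n)
  · have hlim := hx.add (hPx.const_smul (μ - d))
    rw [smul_zero, add_zero] at hlim
    exact hlim.congr fun n => hsplit (x n)

end ApproxEigenvalue

theorem stmt9_general {X : Type*} [NormedAddCommGroup X] [NormedSpace ℂ X]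
    (T P : X →L[ℂ] X)
    (hProj : P.comp P = P) (hPT : P.comp T = P) (hTP : T.comp P = P)
    (μ : ℂ) (hμ0 : μ ≠ 0) (hμ1 : μ ≠ 1) :
    (∃ x : ℕ → X, (∀ n, ‖x n‖ = 1) ∧
        Tendsto (fun n => ‖(T - P) (x n) - μ • x n‖) atTop (𝓝 0)) ↔
    (∃ y : ℕ → X, (∀ n, ‖y n‖ = 1) ∧
        Tendsto (fun n => ‖T (y n) - μ • y n‖) atTop (𝓝 0)) := by
  have hPTsubP : P.comp (T - P) = (0 : ℂ) • P := by
    rw [ContinuousLinearMap.comp_sub, hPT, hProj, sub_self, zero_smul]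
  have hPT_smul : P.comp T = (1 : ℂ) • P := by rw [hPT, one_smul]
  have hTQ : T.comp (ContinuousLinearMap.id ℂ X - P) = (T - P) - (0 : ℂ) • P := by
    rw [ContinuousLinearMap.comp_sub, ContinuousLinearMap.comp_id, hTP, zero_smul, sub_zero]
  have hTPQ : (T - P).comp (ContinuousLinearMap.id ℂ X - P) = T - (1 : ℂ) • P := by
    rw [ContinuousLinearMap.comp_sub, ContinuousLinearMap.comp_id, ContinuousLinearMap.sub_comp,
      hTP, hProj, sub_self, sub_zero, one_smul]
  exact ⟨IsApproxEigenvalue.of_comp_id_sub hPTsubP hμ0 hTQ,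
    IsApproxEigenvalue.of_comp_id_sub hPT_smul hμ1 hTPQ⟩

theorem stmt9 {X : Type*} [NormedAddCommGroup X] [NormedSpace ℂ X] [CompleteSpace X]
    (T P : X →L[ℂ] X) (hT : ‖T‖ ≤ 1)
    (hProj : P.comp P = P) (hPT : P.comp T = P) (hTP : T.comp P = P)
    (μ : ℂ) (hμ0 : μ ≠ 0) (hμ1 : μ ≠ 1) :
    (∃ x : ℕ → X, (∀ n, ‖x n‖ = 1) ∧
        Tendsto (fun n => ‖(T - P) (x n) - μ • x n‖) atTop (𝓝 0)) ↔
    (∃ y : ℕ → X, (∀ n, ‖y n‖ = 1) ∧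
        Tendsto (fun n => ‖T (y n) - μ • y n‖) atTop (𝓝 0)) :=
  stmt9_general T P hProj hPT hTP μ hμ0 hμ1
end

section
/- Let X be a complex Banach space, T a bounded linear operator on X with ‖T‖ ≤ 1, and P a bounded projection (P ∘ P = P) on X with ‖P‖ ≤ 1 and PT = TP = P. If T is uniformly P-ergodic, then ‖Tⁿ − P‖^{1/n} → β* as n → ∞, where β* := sup{|λ| : λ ∈ σ(T), λ ≠ 1} (supremum over the empty set taken to be 0); equivalently, ‖Tⁿ − P‖ = (β* + αₙ)ⁿ for a sequence αₙ → 0. -/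
/-!
Put `S = T - P`. Since `P` is idempotent and `PT = TP = P`, one has `Sⁿ = Tⁿ - P` for `n ≥ 1`,
so by Gelfand's formula `‖Tⁿ - P‖^{1/n} → r(S)`. Ergodicity gives `‖Sⁿ‖ < 1` for some `n`, hence
`1 ∉ σ(S)`. For `λ ≠ 0, 1` the elements `λ - T` and `λ - S` differ by `P`, and on the range of `P`
they act as the nonzero scalars `λ - 1` and `λ`; so one is invertible iff the other is. Thus `σ(S)`
and `σ(T) \ {1}` agree up to the point `0`, and `r(S) = sup {|λ| : λ ∈ σ(T), λ ≠ 1}`.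
-/

open Filter Topology ENNReal

section Algebra

variable {𝕜 A : Type*} [Field 𝕜] [Ring A] [Algebra 𝕜 A]

theorem IsIdempotentElem.isUnit_one_add_smul {p : A} (hp : IsIdempotentElem p) {k : 𝕜}
    (hk : 1 + k ≠ 0) : IsUnit (1 + k • p) := by
  set q : A := 1 - (k / (1 + k)) • p
  have hinv : (1 + k • p) * q = 1 := by
    have hcoeff : k - k / (1 + k) - k * (k / (1 + k)) = 0 := by field_simp; ring
    simp only [q, mul_sub, add_mul, one_mul, mul_one, smul_mul_smul_comm, hp.eq]
    calc _ = (1 : A) + (k - k / (1 + k) - k * (k / (1 + k))) • p := by module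
      _ = 1 := by rw [hcoeff, zero_smul, add_zero]
  have hcomm : Commute (1 + k • p) q := (Commute.one_left q).add_left
    (((Commute.one_right p).sub_right ((Commute.refl p).smul_right _)).smul_left k)
  exact ⟨⟨_, q, hinv, hcomm.eq ▸ hinv⟩, rfl⟩

theorem IsUnit.add_smul_of_mul_eq_smul {a p : A} {c d : 𝕜} (ha : IsUnit a)
    (hp : IsIdempotentElem p) (hap : a * p = c • p) (hc : c ≠ 0) (hcd : c + d ≠ 0) :
    IsUnit (a + d • p) := by
  have hfac : a + d • p = a * (1 + (d / c) • p) := by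
    rw [mul_add, mul_one, mul_smul_comm, hap, smul_smul, div_mul_cancel₀ d hc]
  rw [hfac]
  refine ha.mul (hp.isUnit_one_add_smul ?_)
  rwa [one_add_div hc, div_ne_zero_iff, and_iff_left hc]

theorem spectrum.mem_sub_iff_of_mul_eq {t p : A} (hp : IsIdempotentElem p) (htp : t * p = p)
    {μ : 𝕜} (h0 : μ ≠ 0) (h1 : μ ≠ 1) : μ ∈ spectrum 𝕜 (t - p) ↔ μ ∈ spectrum 𝕜 t := by
  simp only [spectrum.mem_iff, not_iff_not, Algebra.algebraMap_eq_smul_one]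
  constructor
  · intro hu
    have hap : (μ • 1 - (t - p)) * p = μ • p := by
      rw [sub_mul, sub_mul, htp, hp.eq, sub_self, sub_zero, smul_one_mul]
    have := hu.add_smul_of_mul_eq_smul hp hap h0 (d := -1)
      (by rwa [← sub_eq_add_neg, sub_ne_zero])
    rwa [neg_one_smul, ← sub_eq_add_neg, sub_sub, sub_add_cancel] at this
  · intro hu
    have hap : (μ • 1 - t) * p = (μ - 1) • p := by
      rw [sub_mul, htp, smul_one_mul, sub_smul, one_smul]
    have := hu.add_smul_of_mul_eq_smul hp hap (sub_ne_zero.2 h1) (d := 1) (by simpa using h0)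
    rwa [one_smul, sub_add] at this

theorem sub_pow_of_isIdempotentElem {t p : A} (hp : IsIdempotentElem p) (htp : t * p = p)
    (hpt : p * t = p) {n : ℕ} (hn : n ≠ 0) : (t - p) ^ n = t ^ n - p := by
  have hpow : ∀ m : ℕ, t ^ m * p = p := fun m => by
    induction m with
    | zero => rw [pow_zero, one_mul]
    | succ m ih => rw [pow_succ', mul_assoc, ih, htp]
  obtain ⟨m, rfl⟩ := Nat.exists_eq_add_one_of_ne_zero hn
  clear hn
  induction m with
  | zero => rw [zero_add, pow_one, pow_one]
  | succ m ih =>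
    rw [pow_succ, ih, mul_sub, sub_mul, sub_mul, hpow, hpt, hp.eq, ← pow_succ]
    abel

end Algebra

section SpectralRadius

variable {𝕜 : Type*} [NormedField 𝕜]

theorem toReal_iSup_nnnorm_eq_sSup (s : Set 𝕜) :
    (⨆ μ ∈ s, (‖μ‖₊ : ℝ≥0∞)).toReal = sSup ((‖·‖) '' s) := by
  rw [← sSup_image, toReal_sSup _ (by simp), Set.image_image]
  simp

theorem spectralRadius_sub_of_isIdempotentElem {A : Type*} [Ring A] [Algebra 𝕜 A] {t p : A}
    (hp : IsIdempotentElem p) (htp : t * p = p) (h1 : (1 : 𝕜) ∉ spectrum 𝕜 (t - p)) :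
    spectralRadius 𝕜 (t - p) = ⨆ μ ∈ spectrum 𝕜 t \ {1}, (‖μ‖₊ : ℝ≥0∞) := by
  refine le_antisymm (iSup₂_le fun μ hμ => ?_) (iSup₂_le fun μ hμ => ?_)
  · rcases eq_or_ne μ 0 with rfl | h0
    · simp
    have hμ1 : μ ≠ 1 := ne_of_mem_of_not_mem hμ h1
    exact le_biSup (fun μ => (‖μ‖₊ : ℝ≥0∞))
      ⟨(spectrum.mem_sub_iff_of_mul_eq hp htp h0 hμ1).1 hμ, hμ1⟩
  · rcases eq_or_ne μ 0 with rfl | h0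
    · simp
    exact le_biSup (fun μ => (‖μ‖₊ : ℝ≥0∞))
      ((spectrum.mem_sub_iff_of_mul_eq hp htp h0 hμ.2).2 hμ.1)

variable {A : Type*} [NormedRing A] [NormedAlgebra 𝕜 A] [CompleteSpace A]

theorem spectrum.one_notMem_of_norm_pow_lt_one {a : A} {n : ℕ} (h : ‖a ^ n‖ < 1) :
    (1 : 𝕜) ∉ spectrum 𝕜 a := fun h1 => by
  have h1n := spectrum.pow_mem_pow a n h1
  rw [one_pow, spectrum.mem_iff, map_one] at h1n
  exact h1n (isUnit_one_sub_of_norm_lt_one h)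

variable (𝕜) in
theorem spectrum.spectralRadius_ne_top (a : A) : spectralRadius 𝕜 a ≠ ∞ :=
  ((spectralRadius_le_pow_nnnorm_pow_one_div 𝕜 a 0).trans_lt (by finiteness)).ne

end SpectralRadius

theorem spectrum.pow_norm_pow_one_div_tendsto_nhds_toReal_spectralRadius {A : Type*}
    [NormedRing A] [NormedAlgebra ℂ A] [CompleteSpace A] (a : A) :
    Tendsto (fun n : ℕ => ‖a ^ n‖ ^ (1 / n : ℝ)) atTop (𝓝 (spectralRadius ℂ a).toReal) :=
  ((ENNReal.tendsto_toReal (spectrum.spectralRadius_ne_top ℂ a)).comp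
    (spectrum.pow_norm_pow_one_div_tendsto_nhds_spectralRadius a)).congr
      fun _ => ENNReal.toReal_ofReal (by positivity)

theorem stmt10_general {X : Type*} [NormedAddCommGroup X] [NormedSpace ℂ X] [CompleteSpace X]
    (T P : X →L[ℂ] X)
    (hProj : P.comp P = P) (hPT : P.comp T = P) (hTP : T.comp P = P)
    (hErg : Tendsto (fun n : ℕ => ‖T ^ n - P‖) atTop (𝓝 0)) :
    Tendsto (fun n : ℕ => ‖T ^ n - P‖ ^ ((1 : ℝ) / (n : ℝ))) atTop
      (𝓝 (sSup {r : ℝ | ∃ μ ∈ spectrum ℂ T, μ ≠ 1 ∧ r = ‖μ‖})) := by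
  have hpow : ∀ n ≠ 0, (T - P) ^ n = T ^ n - P := fun n hn =>
    sub_pow_of_isIdempotentElem hProj hTP hPT hn
  have h1 : (1 : ℂ) ∉ spectrum ℂ (T - P) := by
    obtain ⟨n, hn, hn0⟩ :=
      ((hErg.eventually (gt_mem_nhds one_pos)).and (eventually_ne_atTop 0)).exists
    exact spectrum.one_notMem_of_norm_pow_lt_one (hpow n hn0 ▸ hn)
  have hρ : (spectralRadius ℂ (T - P)).toReal =
      sSup {r : ℝ | ∃ μ ∈ spectrum ℂ T, μ ≠ 1 ∧ r = ‖μ‖} := by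
    rw [spectralRadius_sub_of_isIdempotentElem hProj hTP h1, toReal_iSup_nnnorm_eq_sSup]
    congr 1
    ext r
    simp [eq_comm, and_assoc]
  rw [← hρ]
  refine (spectrum.pow_norm_pow_one_div_tendsto_nhds_toReal_spectralRadius (T - P)).congr' ?_
  filter_upwards [eventually_ne_atTop 0] with n hn
  rw [hpow n hn]

theorem stmt10 {X : Type*} [NormedAddCommGroup X] [NormedSpace ℂ X] [CompleteSpace X]
    (T P : X →L[ℂ] X) (hT : ‖T‖ ≤ 1) (hPnorm : ‖P‖ ≤ 1)
    (hProj : P.comp P = P) (hPT : P.comp T = P) (hTP : T.comp P = P)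
    (hErg : Tendsto (fun n : ℕ => ‖T ^ n - P‖) atTop (𝓝 0)) :
    Tendsto (fun n : ℕ => ‖T ^ n - P‖ ^ ((1 : ℝ) / (n : ℝ))) atTop
      (𝓝 (sSup {r : ℝ | ∃ μ ∈ spectrum ℂ T, μ ≠ 1 ∧ r = ‖μ‖})) :=
  stmt10_general T P hProj hPT hTP hErg
end
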